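/- Let (X,d) be a metric space in which every open ball B(x,r) is relatively compact, and suppose there exists C ≥ 1 such that d_ε(x,y) ≤ C d(x,y) for all ε > 0 and all x,y ∈ X. Define ρ(x,y) := lim_{ε↓0} d_ε(x,y). Then for every x,y ∈ X there exists a midpoint z ∈ X for ρ, i.e., a point z with ρ(x,z) = ρ(y,z) = ρ(x,y)/2. -/

import Mathlib

/-!
Cutting a nearly optimal `ε`-chain from `x` to `y` at its last vertex within half of its
length gives a point `z_ε` with `d_ε(x, z_ε), d_ε(y, z_ε) ≤ ρ(x, y) / 2 + O(ε)`. These points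
stay in a fixed ball, so along `ε = 1 / (n + 1)` a subsequence converges to some `z`. The chain
condition `d_δ ≤ C d` lets `d_δ(x, ·)` pass to this limit, giving
`d_δ(x, z), d_δ(y, z) ≤ ρ(x, y) / 2` for every `δ > 0`; hence `ρ(x, z), ρ(y, z) ≤ ρ(x, y) / 2`,
and the triangle inequality for `ρ` forces equality.
-/

open Metric ENNReal

/-- The `ε`-chain metric `d_ε` associated with a distance function `ρ`:
the infimum of total lengths of `ε`-chains from `x` to `y` (infimum of the
empty set being `∞`). -/
noncomputable def chainDist {X : Type*} (ρ : X → X → ℝ) (ε : ℝ) (x y : X) : ℝ≥0∞ :=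
  ⨅ c : {c : ℕ × (ℕ → X) // 0 < c.1 ∧ c.2 0 = x ∧ c.2 c.1 = y ∧
      ∀ i < c.1, ρ (c.2 i) (c.2 (i + 1)) < ε},
    ∑ i ∈ Finset.range c.val.1, ENNReal.ofReal (ρ (c.val.2 i) (c.val.2 (i + 1)))

open Filter Topology

section Chains

variable {X : Type*} [PseudoMetricSpace X]

noncomputable def chainLength (f : ℕ → X) (N : ℕ) : ℝ≥0∞ :=
  ∑ i ∈ Finset.range N, ENNReal.ofReal (dist (f i) (f (i + 1)))

@[simp]
lemma chainLength_zero (f : ℕ → X) : chainLength f 0 = 0 := by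
  simp [chainLength]

lemma chainLength_succ (f : ℕ → X) (N : ℕ) :
    chainLength f (N + 1) = chainLength f N + ENNReal.ofReal (dist (f N) (f (N + 1))) :=
  Finset.sum_range_succ _ _

lemma chainLength_add (f : ℕ → X) (m n : ℕ) :
    chainLength f (m + n) = chainLength f m + chainLength (fun i => f (m + i)) n := by
  simp only [chainLength, Finset.sum_range_add, add_assoc]

lemma chainLength_ne_top (f : ℕ → X) (N : ℕ) : chainLength f N ≠ ⊤ :=
  ENNReal.sum_ne_top.2 fun _ _ => ofReal_ne_top

lemma chainLength_congr {f g : ℕ → X} {N : ℕ} (h : ∀ i ≤ N, f i = g i) :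
    chainLength f N = chainLength g N :=
  Finset.sum_congr rfl fun i hi => by
    rw [Finset.mem_range] at hi
    rw [h i hi.le, h (i + 1) hi]

lemma chainLength_reverse (f : ℕ → X) (N : ℕ) :
    chainLength (fun i => f (N - i)) N = chainLength f N := by
  rw [chainLength, ← Finset.sum_range_reflect]
  refine Finset.sum_congr rfl fun i hi => ?_
  rw [Finset.mem_range] at hi
  rw [show N - (N - 1 - i) = i + 1 by omega, show N - (N - 1 - i + 1) = i by omega, dist_comm]

lemma ofReal_dist_le_chainLength (f : ℕ → X) (N : ℕ) :
    ENNReal.ofReal (dist (f 0) (f N)) ≤ chainLength f N := by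
  rw [chainLength, ← ENNReal.ofReal_sum_of_nonneg fun _ _ => dist_nonneg]
  exact ENNReal.ofReal_le_ofReal (dist_le_range_sum_dist f N)

lemma chainDist_le_chainLength {ε : ℝ} (hε : 0 < ε) {f : ℕ → X} {N : ℕ}
    (hf : ∀ i < N, dist (f i) (f (i + 1)) < ε) :
    chainDist dist ε (f 0) (f N) ≤ chainLength f N := by
  have of_pos : ∀ {N : ℕ} {f : ℕ → X}, 0 < N →
      (∀ i < N, dist (f i) (f (i + 1)) < ε) → chainDist dist ε (f 0) (f N) ≤ chainLength f N :=
    fun {N f} hN hf => by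
      unfold chainDist
      exact iInf_le_of_le ⟨(N, f), hN, rfl, rfl, hf⟩ le_rfl
  rcases N.eq_zero_or_pos with rfl | hN
  · -- the empty chain is not admissible; use the constant chain of length one
    simpa [chainLength] using of_pos (f := fun _ => f 0) one_pos (by simp [hε])
  · exact of_pos hN hf

lemma le_chainDist_add {ε : ℝ} {x y : X} {a b : ℝ≥0∞}
    (h : ∀ (N : ℕ) (f : ℕ → X), 0 < N → f 0 = x → f N = y →
      (∀ i < N, dist (f i) (f (i + 1)) < ε) → a ≤ chainLength f N + b) :
    a ≤ chainDist dist ε x y + b := by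
  rw [chainDist, ENNReal.iInf_add]
  exact le_iInf fun c => h c.1.1 c.1.2 c.2.1 c.2.2.1 c.2.2.2.1 c.2.2.2.2

lemma le_chainDist {ε : ℝ} {x y : X} {a : ℝ≥0∞}
    (h : ∀ (N : ℕ) (f : ℕ → X), 0 < N → f 0 = x → f N = y →
      (∀ i < N, dist (f i) (f (i + 1)) < ε) → a ≤ chainLength f N) :
    a ≤ chainDist dist ε x y := by
  simpa using le_chainDist_add (b := 0) (by simpa using h)

lemma exists_chainLength_lt {ε : ℝ} {x y : X} {t : ℝ≥0∞} (h : chainDist dist ε x y < t) :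
    ∃ (N : ℕ) (f : ℕ → X), f 0 = x ∧ f N = y ∧
      (∀ i < N, dist (f i) (f (i + 1)) < ε) ∧ chainLength f N < t := by
  obtain ⟨c, hc⟩ := iInf_lt_iff.1 h
  exact ⟨c.1.1, c.1.2, c.2.2.1, c.2.2.2.1, c.2.2.2.2, hc⟩

lemma ofReal_dist_le_chainDist (ε : ℝ) (x y : X) :
    ENNReal.ofReal (dist x y) ≤ chainDist dist ε x y :=
  le_chainDist fun N f _ hx hy _ => hx ▸ hy ▸ ofReal_dist_le_chainLength f N

lemma chainDist_antitone (x y : X) : Antitone fun ε => chainDist dist ε x y :=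
  fun _ _ hε => le_chainDist fun _ _ hN hx hy hf => hx ▸ hy ▸
    chainDist_le_chainLength (dist_nonneg.trans_lt ((hf 0 hN).trans_le hε))
      fun i hi => (hf i hi).trans_le hε

lemma chainDist_comm (ε : ℝ) (x y : X) : chainDist dist ε x y = chainDist dist ε y x := by
  suffices ∀ x y : X, chainDist dist ε y x ≤ chainDist dist ε x y from
    le_antisymm (this y x) (this x y)
  refine fun x y => le_chainDist fun N f hN hx hy hf => ?_
  have hrev := chainDist_le_chainLength (f := fun i => f (N - i)) (N := N)
    (dist_nonneg.trans_lt (hf 0 hN)) fun i hi => by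
      rw [dist_comm, show N - i = N - (i + 1) + 1 by omega]
      exact hf _ (by omega)
  simpa [hx, hy, chainLength_reverse] using hrev

lemma chainDist_triangle {ε : ℝ} (hε : 0 < ε) (x y z : X) :
    chainDist dist ε x z ≤ chainDist dist ε x y + chainDist dist ε y z := by
  refine le_chainDist_add fun N₁ f₁ _ hx₁ hy₁ hf₁ => ?_
  rw [add_comm]
  refine le_chainDist_add fun N₂ f₂ _ hy₂ hz₂ hf₂ => ?_
  let g : ℕ → X := fun i => if i ≤ N₁ then f₁ i else f₂ (i - N₁)
  have hg₁ : ∀ i ≤ N₁, g i = f₁ i := fun i hi => if_pos hi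
  have hg₂ : ∀ i ≤ N₂, g (N₁ + i) = f₂ i := fun i _ => by
    rcases i.eq_zero_or_pos with rfl | hi
    · simp [g, hy₁, hy₂]
    · simp [g, show ¬N₁ + i ≤ N₁ by omega]
  have hg : ∀ i < N₁ + N₂, dist (g i) (g (i + 1)) < ε := fun i hi => by
    by_cases hi₁ : i < N₁
    · rw [hg₁ i hi₁.le, hg₁ (i + 1) hi₁]
      exact hf₁ i hi₁
    · obtain ⟨j, rfl⟩ := Nat.exists_eq_add_of_le (not_lt.1 hi₁)
      rw [hg₂ j (by omega), add_assoc, hg₂ (j + 1) (by omega)]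
      exact hf₂ j (by omega)
  calc chainDist dist ε x z = chainDist dist ε (g 0) (g (N₁ + N₂)) := by
        rw [hg₁ 0 (Nat.zero_le _), hg₂ N₂ le_rfl, hx₁, hz₂]
    _ ≤ chainLength g (N₁ + N₂) := chainDist_le_chainLength hε hg
    _ = chainLength f₂ N₂ + chainLength f₁ N₁ := by
        rw [chainLength_add, chainLength_congr hg₁, chainLength_congr hg₂, add_comm]

end Chains

section Midpoint

variable {X : Type*} [PseudoMetricSpace X]

lemma exists_chainDist_le_half {ε : ℝ} (hε : 0 < ε) {x y : X} {t : ℝ≥0∞}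
    (h : chainDist dist ε x y < t) :
    ∃ z, chainDist dist ε x z ≤ t / 2 ∧
      chainDist dist ε z y ≤ t / 2 + ENNReal.ofReal ε := by
  obtain ⟨N, f, hx, hy, hf, hlt⟩ := exists_chainLength_lt h
  set S := chainLength f N
  set k := Nat.findGreatest (fun m => chainLength f m ≤ S / 2) N
  have hkN : k ≤ N := Nat.findGreatest_le N
  have hk : chainLength f k ≤ S / 2 := 
    Nat.findGreatest_spec (P := fun m => chainLength f m ≤ S / 2) (Nat.zero_le N) (by simp)
  obtain ⟨n, hN⟩ := Nat.exists_eq_add_of_le hkN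
  have htail : chainLength (fun i => f (k + i)) n ≤ S / 2 + ENNReal.ofReal ε := by
    rcases n.eq_zero_or_pos with rfl | hn
    · simp
    have hk₁ : S / 2 < chainLength f (k + 1) :=
      not_le.1 (Nat.findGreatest_is_greatest (Nat.lt_succ_self k) (by omega))
    have hstep := hf k (by omega)
    refine ENNReal.le_of_add_le_add_left (chainLength_ne_top f k) ?_
    calc chainLength f k + chainLength (fun i => f (k + i)) n = S / 2 + S / 2 := by
          rw [← chainLength_add, ← hN, ENNReal.add_halves]
      _ ≤ S / 2 + (chainLength f k + ENNReal.ofReal ε) := by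
          gcongr
          calc S / 2 ≤ chainLength f (k + 1) := hk₁.le
            _ = chainLength f k + ENNReal.ofReal (dist (f k) (f (k + 1))) := chainLength_succ f k
            _ ≤ chainLength f k + ENNReal.ofReal ε := by gcongr
      _ = chainLength f k + (S / 2 + ENNReal.ofReal ε) := by ring
  refine ⟨f k, ?_, ?_⟩
  · calc chainDist dist ε x (f k) ≤ chainLength f k :=
          hx ▸ chainDist_le_chainLength hε fun i hi => hf i (by omega)
      _ ≤ t / 2 := hk.trans (ENNReal.div_le_div_right hlt.le 2)
  · calc chainDist dist ε (f k) y ≤ chainLength (fun i => f (k + i)) n :=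
          hy ▸ hN ▸ chainDist_le_chainLength (f := fun i => f (k + i)) hε
            fun i hi => by simpa [add_assoc] using hf (k + i) (by omega)
      _ ≤ t / 2 + ENNReal.ofReal ε := htail.trans (by gcongr)

end Midpoint

lemma eq_half_of_le_add_of_le_half {a b c : ℝ≥0∞} (hc : c ≠ ⊤) (h : c ≤ a + b)
    (ha : a ≤ c / 2) (hb : b ≤ c / 2) : a = c / 2 := by
  refine le_antisymm ha (not_lt.1 fun hlt => h.not_gt ?_)
  calc a + b < c / 2 + c / 2 := ENNReal.add_lt_add_of_lt_of_le
        (ne_top_of_le_ne_top (div_ne_top hc two_ne_zero) hb) hlt hb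
    _ = c := ENNReal.add_halves c

section Limit

variable {X : Type*} [PseudoMetricSpace X] {ρ : X → X → ℝ≥0∞}

lemma chainDist_le_limit
    (hρ : ∀ x y : X, Tendsto (fun ε : ℝ => chainDist dist ε x y) (𝓝[>] 0) (𝓝 (ρ x y)))
    {ε : ℝ} (hε : 0 < ε) (x y : X) : chainDist dist ε x y ≤ ρ x y :=
  ge_of_tendsto (hρ x y) <|
    (eventually_nhdsWithin_of_eventually_nhds (eventually_lt_nhds hε)).mono fun _ h =>
      chainDist_antitone x y h.le

lemma limit_le_of_chainDist_le
    (hρ : ∀ x y : X, Tendsto (fun ε : ℝ => chainDist dist ε x y) (𝓝[>] 0) (𝓝 (ρ x y)))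
    {x y : X} {a : ℝ≥0∞} (h : ∀ ε > 0, chainDist dist ε x y ≤ a) : ρ x y ≤ a :=
  le_of_tendsto (hρ x y) (eventually_nhdsWithin_of_forall h)

lemma limit_comm
    (hρ : ∀ x y : X, Tendsto (fun ε : ℝ => chainDist dist ε x y) (𝓝[>] 0) (𝓝 (ρ x y)))
    (x y : X) : ρ x y = ρ y x :=
  tendsto_nhds_unique (hρ x y) ((hρ y x).congr fun ε => chainDist_comm ε y x)

lemma limit_triangle
    (hρ : ∀ x y : X, Tendsto (fun ε : ℝ => chainDist dist ε x y) (𝓝[>] 0) (𝓝 (ρ x y)))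
    (x y z : X) : ρ x z ≤ ρ x y + ρ y z :=
  le_of_tendsto_of_tendsto (hρ x z) ((hρ x y).add (hρ y z))
    (eventually_nhdsWithin_of_forall fun _ hε => chainDist_triangle hε x y z)

lemma exists_chainDist_le_limit_half
    (hρ : ∀ x y : X, Tendsto (fun ε : ℝ => chainDist dist ε x y) (𝓝[>] 0) (𝓝 (ρ x y)))
    {x y : X} (hxy : ρ x y ≠ ⊤) {ε : ℝ} (hε : 0 < ε) :
    ∃ z, chainDist dist ε x z ≤ (ρ x y + ENNReal.ofReal ε) / 2 + ENNReal.ofReal ε ∧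
      chainDist dist ε y z ≤ (ρ x y + ENNReal.ofReal ε) / 2 + ENNReal.ofReal ε := by
  obtain ⟨z, hxz, hzy⟩ := exists_chainDist_le_half hε <|
    (chainDist_le_limit hρ hε x y).trans_lt <|
      ENNReal.lt_add_right hxy (ENNReal.ofReal_pos.2 hε).ne'
  exact ⟨z, hxz.trans le_self_add, chainDist_comm ε y z ▸ hzy⟩

end Limit

lemma chainDist_le_of_tendsto {X ι : Type*} [PseudoMetricSpace X] {l : Filter ι} [l.NeBot]
    {C δ : ℝ} (hδ : 0 < δ)
    (hchain : ∀ y w : X, chainDist dist δ y w ≤ ENNReal.ofReal (C * dist y w))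
    {x z : X} {u : ι → X} (hu : Tendsto u l (𝓝 z)) {a : ι → ℝ≥0∞} {A : ℝ≥0∞}
    (ha : Tendsto a l (𝓝 A)) (h : ∀ᶠ i in l, chainDist dist δ x (u i) ≤ a i) :
    chainDist dist δ x z ≤ A := by
  have hdist : Tendsto (fun i => ENNReal.ofReal (C * dist (u i) z)) l (𝓝 0) := by
    simpa using ENNReal.tendsto_ofReal ((tendsto_iff_dist_tendsto_zero.1 hu).const_mul C)
  refine ge_of_tendsto (by simpa using ha.add hdist) (h.mono fun i hi => ?_)
  exact (chainDist_triangle hδ x (u i) z).trans (add_le_add hi (hchain _ _))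

theorem chainDist_limit_midpoint_general {X : Type*} [MetricSpace X]
    (hrel : ∀ (x : X) (r : ℝ), IsCompact (closure (Metric.ball x r)))
    (C : ℝ)
    (hchain : ∀ ε : ℝ, 0 < ε → ∀ x y : X,
      chainDist dist ε x y ≤ ENNReal.ofReal (C * dist x y))
    (ρ : X → X → ℝ≥0∞)
    (hρ : ∀ x y : X, Filter.Tendsto (fun ε : ℝ => chainDist dist ε x y)
      (nhdsWithin 0 (Set.Ioi 0)) (nhds (ρ x y))) :
    ∀ x y : X, ∃ z : X, ρ x z = ρ x y / 2 ∧ ρ y z = ρ x y / 2 := by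
  intro x y
  set D := ρ x y
  have hD : D ≠ ⊤ := ne_top_of_le_ne_top ofReal_ne_top <|
    limit_le_of_chainDist_le hρ fun ε hε => hchain ε hε x y
  set ε : ℕ → ℝ := fun n => 1 / (n + 1)
  have hε0 : Tendsto ε atTop (𝓝 0) := tendsto_one_div_add_atTop_nhds_zero_nat
  set a : ℕ → ℝ≥0∞ := fun n => (D + ENNReal.ofReal (ε n)) / 2 + ENNReal.ofReal (ε n)
  have ha : Tendsto a atTop (𝓝 (D / 2)) := by
    have he : Tendsto (fun n => ENNReal.ofReal (ε n)) atTop (𝓝 0) := by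
      simpa using ENNReal.tendsto_ofReal hε0
    simpa using (ENNReal.Tendsto.div_const (tendsto_const_nhds.add he) (Or.inr two_ne_zero)).add he
  choose u hux huy using fun n =>
    exists_chainDist_le_limit_half hρ hD (Nat.one_div_pos_of_nat (n := n))
  have hbdd : ∀ᶠ n in atTop, u n ∈ ball x (D / 2 + 1).toReal := by
    filter_upwards [ha.eventually <| gt_mem_nhds <|
      ENNReal.lt_add_right (div_ne_top hD two_ne_zero) one_ne_zero] with n hn
    rw [mem_ball', ← ofReal_lt_iff_lt_toReal dist_nonneg (by finiteness)]
    exact ((ofReal_dist_le_chainDist _ x (u n)).trans (hux n)).trans_lt hn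
  obtain ⟨z, -, φ, hφ, hu⟩ :=
    (hrel x _).tendsto_subseq' (hbdd.mono fun n hn => subset_closure hn).frequently
  have hρz : ∀ w, (∀ n, chainDist dist (ε n) w (u n) ≤ a n) → ρ w z ≤ D / 2 := by
    intro w hw
    refine limit_le_of_chainDist_le hρ fun δ hδ => ?_
    have hεδ : ∀ᶠ n in atTop, ε (φ n) ≤ δ :=
      (hε0.comp hφ.tendsto_atTop).eventually (eventually_le_nhds hδ)
    exact chainDist_le_of_tendsto hδ (hchain δ hδ) hu (ha.comp hφ.tendsto_atTop)
      (hεδ.mono fun n hn => (chainDist_antitone w _ hn).trans (hw _))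
  have hsplit : D ≤ ρ x z + ρ y z := limit_comm hρ z y ▸ limit_triangle hρ x z y
  exact ⟨z, eq_half_of_le_add_of_le_half hD hsplit (hρz x hux) (hρz y huy),
    eq_half_of_le_add_of_le_half hD (add_comm (ρ x z) _ ▸ hsplit) (hρz y huy) (hρz x hux)⟩

/-- under the chain condition (with all balls relatively compact),
the limit metric `ρ(x,y) := lim_{ε↓0} d_ε(x,y)` admits midpoints: for all `x, y`
there is `z` with `ρ(x,z) = ρ(y,z) = ρ(x,y)/2`. -/
theorem chainDist_limit_midpoint {X : Type*} [MetricSpace X]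
    (hrel : ∀ (x : X) (r : ℝ), IsCompact (closure (Metric.ball x r)))
    (C : ℝ) (hC : 1 ≤ C)
    (hchain : ∀ ε : ℝ, 0 < ε → ∀ x y : X,
      chainDist dist ε x y ≤ ENNReal.ofReal (C * dist x y))
    (ρ : X → X → ℝ≥0∞)
    (hρ : ∀ x y : X, Filter.Tendsto (fun ε : ℝ => chainDist dist ε x y)
      (nhdsWithin 0 (Set.Ioi 0)) (nhds (ρ x y))) :
    ∀ x y : X, ∃ z : X, ρ x z = ρ x y / 2 ∧ ρ y z = ρ x y / 2 :=
  chainDist_limit_midpoint_general hrel C hchain ρ hρ
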